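/- If (φ₀,φ₁,σ) is a deterrence equilibrium of the stage game Γ(μ) in which Firm 1 is deterred (so α⁻_μ ≥ 1/2), then Firm 0 plays the pure price 2α⁻_μ−1 with probability one, the consumer buys from Firm 0 with probability one, and Firm 0's equilibrium payoff equals 2α⁻_μ−1. Symmetrically, if Firm 0 is deterred (so α⁺_μ ≤ 1/2), then Firm 1 plays the pure price 1−2α⁺_μ with probability one and earns 1−2α⁺_μ. -/

import Mathlib

open MeasureTheory Set Filter Topology
open scoped ENNReal NNReal

noncomputable section

/-- The consumer's possible actions: buy product 0, buy product 1, or exit. -/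
inductive CAction : Type
  | buy0 : CAction
  | buy1 : CAction
  | exit : CAction

instance : MeasurableSpace CAction := ⊤

/-- A signal structure `(F₀, F₁, S)`: two mutually absolutely continuous
probability measures on a measurable space `S`. -/
structure SignalStructure (S : Type) [MeasurableSpace S] : Type where
  F0 : Measure S
  F1 : Measure S
  prob0 : IsProbabilityMeasure F0
  prob1 : IsProbabilityMeasure F1
  ac01 : F0 ≪ F1
  ac10 : F1 ≪ F0

namespace SignalStructure

variable {S : Type} [MeasurableSpace S]

/-- The reference measure `(F₀ + F₁)/2`. -/
def ref (𝒮 : SignalStructure S) : Measure S := (2 : ℝ≥0∞)⁻¹ • (𝒮.F0 + 𝒮.F1)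

/-- Radon–Nikodym density of `F₀` with respect to `(F₀+F₁)/2`. -/
def f0 (𝒮 : SignalStructure S) : S → ℝ≥0∞ := 𝒮.F0.rnDeriv 𝒮.ref

/-- Radon–Nikodym density of `F₁` with respect to `(F₀+F₁)/2`. -/
def f1 (𝒮 : SignalStructure S) : S → ℝ≥0∞ := 𝒮.F1.rnDeriv 𝒮.ref

/-- The private belief `p(s) = f₀(s)/(f₀(s)+f₁(s))`. -/
def p (𝒮 : SignalStructure S) (s : S) : ℝ :=
  (𝒮.f0 s).toReal / ((𝒮.f0 s).toReal + (𝒮.f1 s).toReal)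

/-- `G₀(x) = F₀ {s | p(s) < x}`, the CDF of the private belief in state 0. -/
def G0 (𝒮 : SignalStructure S) (x : ℝ) : ℝ := (𝒮.F0 {s | 𝒮.p s < x}).toReal

/-- `G₁(x) = F₁ {s | p(s) < x}`, the CDF of the private belief in state 1. -/
def G1 (𝒮 : SignalStructure S) (x : ℝ) : ℝ := (𝒮.F1 {s | 𝒮.p s < x}).toReal

/-- `α⁻ = inf {x | G(x) > 0}`. -/
def alphaLo (𝒮 : SignalStructure S) : ℝ := sInf {x | 0 < 𝒮.G0 x}

/-- `α⁺ = sup {x | G(x) < 1}`. -/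
def alphaHi (𝒮 : SignalStructure S) : ℝ := sSup {x | 𝒮.G0 x < 1}

/-- Signals are bounded if `α⁻ > 0` and `α⁺ < 1`. -/
def Bounded (𝒮 : SignalStructure S) : Prop := 0 < 𝒮.alphaLo ∧ 𝒮.alphaHi < 1

/-- Signals are unbounded if `α⁻ = 0` and `α⁺ = 1`. -/
def Unbounded (𝒮 : SignalStructure S) : Prop := 𝒮.alphaLo = 0 ∧ 𝒮.alphaHi = 1

/-- Assumption 1: `G₀, G₁` are differentiable on `(α⁻, α⁺)` with continuous
nonnegative derivatives `g₀, g₁ : [α⁻, α⁺] → ℝ₊`. -/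
structure Assumption1 (𝒮 : SignalStructure S) (g0 g1 : ℝ → ℝ) : Prop where
  cont0 : ContinuousOn g0 (Icc 𝒮.alphaLo 𝒮.alphaHi)
  cont1 : ContinuousOn g1 (Icc 𝒮.alphaLo 𝒮.alphaHi)
  nonneg0 : ∀ x ∈ Icc 𝒮.alphaLo 𝒮.alphaHi, 0 ≤ g0 x
  nonneg1 : ∀ x ∈ Icc 𝒮.alphaLo 𝒮.alphaHi, 0 ≤ g1 x
  hasDeriv0 : ∀ x ∈ Ioo 𝒮.alphaLo 𝒮.alphaHi, HasDerivAt 𝒮.G0 (g0 x) x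
  hasDeriv1 : ∀ x ∈ Ioo 𝒮.alphaLo 𝒮.alphaHi, HasDerivAt 𝒮.G1 (g1 x) x

/-- The signal structure exhibits vanishing likelihood: `g₁(α⁻) = g₀(α⁺) = 0`. -/
def VanishingLikelihood (𝒮 : SignalStructure S) (g0 g1 : ℝ → ℝ) : Prop :=
  g1 𝒮.alphaLo = 0 ∧ g0 𝒮.alphaHi = 0

end SignalStructure

/-- Bayesian posterior on state 0 from a prior `μ` and a private belief `q`:
`p_μ = μ q / (μ q + (1-μ)(1-q))`. -/
def posterior (μ q : ℝ) : ℝ := μ * q / (μ * q + (1 - μ) * (1 - q))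

/-- The consumer's expected utility, given posterior `q` on state 0 and prices
`τ₀, τ₁`, from each action. -/
def cUtil (q τ0 τ1 : ℝ) : CAction → ℝ
  | CAction.buy0 => q - τ0
  | CAction.buy1 => (1 - q) - τ1
  | CAction.exit => 0

/-- A consumer pure strategy: maps the posted price pair and the signal to an action. -/
abbrev CStrategy (S : Type) : Type := ℝ → ℝ → S → CAction

/-- A mixed price strategy of a firm: a Borel probability measure on `[0,1]`. -/
def IsPriceStrategy (φ : Measure ℝ) : Prop :=
  IsProbabilityMeasure φ ∧ φ (Icc (0:ℝ) 1) = 1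

namespace SignalStructure

variable {S : Type} [MeasurableSpace S]

/-- The signal distribution under prior `μ`: the mixture `μ F₀ + (1-μ) F₁`. -/
def Fmix (𝒮 : SignalStructure S) (μ : ℝ) : Measure S :=
  ENNReal.ofReal μ • 𝒮.F0 + ENNReal.ofReal (1 - μ) • 𝒮.F1

/-- The probability (under prior `μ`) that the consumer takes action `a` when the
pure prices `τ₀, τ₁` are posted. -/
def actProb (𝒮 : SignalStructure S) (μ : ℝ) (σ : CStrategy S) (τ0 τ1 : ℝ) (a : CAction) : ℝ :=
  (𝒮.Fmix μ {s | σ τ0 τ1 s = a}).toReal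

/-- Firm 0's expected payoff in `Γ(μ)` under mixed strategies `φ₀, φ₁` and consumer
strategy `σ`. -/
def Pi0 (𝒮 : SignalStructure S) (μ : ℝ) (φ0 φ1 : Measure ℝ) (σ : CStrategy S) : ℝ :=
  ∫ τ, 𝒮.actProb μ σ τ.1 τ.2 CAction.buy0 * τ.1 ∂(φ0.prod φ1)

/-- Firm 1's expected payoff in `Γ(μ)`. -/
def Pi1 (𝒮 : SignalStructure S) (μ : ℝ) (φ0 φ1 : Measure ℝ) (σ : CStrategy S) : ℝ :=
  ∫ τ, 𝒮.actProb μ σ τ.1 τ.2 CAction.buy1 * τ.2 ∂(φ0.prod φ1)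

/-- The probability that the consumer takes action `a` under mixed price strategies. -/
def actProbMix (𝒮 : SignalStructure S) (μ : ℝ) (φ0 φ1 : Measure ℝ) (σ : CStrategy S)
    (a : CAction) : ℝ :=
  ∫ τ, 𝒮.actProb μ σ τ.1 τ.2 a ∂(φ0.prod φ1)

/-- A subgame perfect equilibrium of the stage game `Γ(μ)`: the consumer strategy is a
best reply to every price pair, and each firm's mixed price strategy maximizes its
expected payoff given the opponent's strategy and the consumer's strategy. -/
structure IsSPE (𝒮 : SignalStructure S) (μ : ℝ) (φ0 φ1 : Measure ℝ) (σ : CStrategy S) :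
    Prop where
  strat0 : IsPriceStrategy φ0
  strat1 : IsPriceStrategy φ1
  meas : ∀ τ0 τ1, Measurable (σ τ0 τ1)
  consumerBR : ∀ τ0 ∈ Icc (0:ℝ) 1, ∀ τ1 ∈ Icc (0:ℝ) 1,
    ∀ᵐ s ∂(𝒮.Fmix μ), ∀ a : CAction,
      cUtil (posterior μ (𝒮.p s)) τ0 τ1 a ≤ cUtil (posterior μ (𝒮.p s)) τ0 τ1 (σ τ0 τ1 s)
  firm0opt : ∀ ψ : Measure ℝ, IsPriceStrategy ψ → 𝒮.Pi0 μ ψ φ1 σ ≤ 𝒮.Pi0 μ φ0 φ1 σ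
  firm1opt : ∀ ψ : Measure ℝ, IsPriceStrategy ψ → 𝒮.Pi1 μ φ0 ψ σ ≤ 𝒮.Pi1 μ φ0 φ1 σ

/-- A deterrence equilibrium: an SPE in which some firm sells with probability zero. -/
def IsDeterrence (𝒮 : SignalStructure S) (μ : ℝ) (φ0 φ1 : Measure ℝ) (σ : CStrategy S) :
    Prop :=
  𝒮.IsSPE μ φ0 φ1 σ ∧
    (𝒮.actProbMix μ φ0 φ1 σ CAction.buy0 = 0 ∨ 𝒮.actProbMix μ φ0 φ1 σ CAction.buy1 = 0)

/-- The market is full at `(μ, σ, τ₀, τ₁)` if the consumer exits with probability zero. -/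
def MarketFull (𝒮 : SignalStructure S) (μ : ℝ) (σ : CStrategy S) (τ0 τ1 : ℝ) : Prop :=
  𝒮.Fmix μ {s | σ τ0 τ1 s = CAction.exit} = 0

open scoped Classical in
/-- The consumer's best-reply threshold `v_μ(τ₀,τ₁)` on the private belief. -/
def v (𝒮 : SignalStructure S) (μ : ℝ) (σ : CStrategy S) (τ0 τ1 : ℝ) : ℝ :=
  if 𝒮.MarketFull μ σ τ0 τ1 then
    (1 - μ) * (1 + τ0 - τ1) / (2 * μ - (2 * μ - 1) * (1 + τ0 - τ1))
  else (1 - μ) * τ0 / (μ - (2 * μ - 1) * τ0)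

end SignalStructure

/-!
Only the consumer's posterior `Q` on state 0 matters, and deterrence of firm 1 is governed by
its essential infimum `m = posterior μ α⁻`. At a price `τ₀ < 2m - 1` every consumer buys from
firm 0, so firm 0 secures any payoff below `2m - 1`. If firm 0 charged more than `2m - 1` with
positive probability, firm 1 could undercut with a small price and sell to the consumers whose
posterior is close to `m`, although it earns nothing in equilibrium. So firm 0's price is at
most `2m - 1` almost surely, while its expected payoff, which is at most its expected price, is
at least `2m - 1`: the price is `2m - 1` almost surely. The case of firm 0 being deterred is the
same after swapping the firms and replacing `Q` by `1 - Q`.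
-/

section General

variable {α : Type*} [MeasurableSpace α] {ν : Measure α}

theorem ae_ge_of_forall_lt {f : α → ℝ} {a : ℝ} (h : ∀ x < a, ∀ᵐ s ∂ν, x ≤ f s) :
    ∀ᵐ s ∂ν, a ≤ f s := by
  have hq : ∀ᵐ s ∂ν, ∀ q : ℚ, (q : ℝ) < a → (q : ℝ) ≤ f s := by
    refine ae_all_iff.2 fun q => ?_
    by_cases hqa : (q : ℝ) < a
    · filter_upwards [h q hqa] with s hs _ using hs
    · exact .of_forall fun _ hlt => absurd hlt hqa
  filter_upwards [hq] with s hs using le_of_forall_rat_lt_imp_le hs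

theorem ae_le_of_forall_gt {f : α → ℝ} {a : ℝ} (h : ∀ x > a, ∀ᵐ s ∂ν, f s ≤ x) :
    ∀ᵐ s ∂ν, f s ≤ a := by
  have hq : ∀ᵐ s ∂ν, ∀ q : ℚ, a < (q : ℝ) → f s ≤ (q : ℝ) := by
    refine ae_all_iff.2 fun q => ?_
    by_cases hqa : a < (q : ℝ)
    · filter_upwards [h q hqa] with s hs _ using hs
    · exact .of_forall fun _ hlt => absurd hlt hqa
  filter_upwards [hq] with s hs using le_of_forall_lt_rat_imp_le hs

theorem aestronglyMeasurable_of_ae_eq_off_countable [MeasurableSingletonClass α]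
    {f g : α → ℝ} {B : Set α} (hB : B.Countable) (hg : Measurable g)
    (hfg : ∀ᵐ x ∂ν, x ∉ B → f x = g x) : AEStronglyMeasurable f ν := by
  classical
  refine ⟨B.piecewise f g,
    (hg.measurable_of_countable_ne (hB.mono fun x hx => ?_)).stronglyMeasurable, ?_⟩
  · by_contra hxB
    exact hx (Set.piecewise_eq_of_notMem _ _ _ hxB).symm
  · filter_upwards [hfg] with x hx
    by_cases hxB : x ∈ B
    · exact (Set.piecewise_eq_of_mem _ _ _ hxB).symm
    · rw [Set.piecewise_eq_of_notMem _ _ _ hxB, hx hxB]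

theorem measure_eq_one_of_compl_eq_zero [IsProbabilityMeasure ν] {s : Set α} (hs : ν sᶜ = 0) :
    ν s = 1 := by
  rw [measure_congr (ae_eq_univ.2 hs), measure_univ]

end General

theorem aestronglyMeasurable_of_mul_snd {μ ν : Measure ℝ} [SFinite ν] {f : ℝ × ℝ → ℝ}
    (hmul : AEStronglyMeasurable (fun τ => f τ * τ.2) (μ.prod ν))
    (hzero : AEStronglyMeasurable (fun x => f (x, 0)) μ) :
    AEStronglyMeasurable f (μ.prod ν) := by
  have hs : MeasurableSet {τ : ℝ × ℝ | τ.2 = 0} := measurable_snd (measurableSet_singleton 0)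
  rw [← Measure.restrict_univ (μ := μ.prod ν), ← Set.union_compl_self {τ : ℝ × ℝ | τ.2 = 0},
    aestronglyMeasurable_union_iff]
  constructor
  · refine (hzero.comp_fst.restrict).congr ((ae_restrict_iff' hs).2 (.of_forall ?_))
    rintro ⟨x, y⟩ (hy : y = 0)
    simp [hy]
  · refine (hmul.restrict.mul measurable_snd.inv.aestronglyMeasurable.restrict).congr
      ((ae_restrict_iff' hs.compl).2 (.of_forall fun τ (hτ : τ.2 ≠ 0) => ?_))
    simp [hτ]

theorem eq_dirac_of_ae_le_of_le_integral {φ : Measure ℝ} [IsProbabilityMeasure φ] {t : ℝ}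
    (hint : Integrable (fun x => x) φ) (hle : ∀ᵐ x ∂φ, x ≤ t) (hge : t ≤ ∫ x, x ∂φ) :
    φ = Measure.dirac t := by
  have hnonneg : 0 ≤ᵐ[φ] fun x => t - x := by filter_upwards [hle] with x hx using sub_nonneg.2 hx
  have hzero : (fun x => t - x) =ᵐ[φ] 0 := by
    refine (integral_eq_zero_iff_of_nonneg_ae hnonneg ((integrable_const t).sub hint)).1
      (le_antisymm ?_ (integral_nonneg_of_ae hnonneg))
    rw [integral_sub (integrable_const t) hint]
    simpa using hge
  have hae : ∀ᵐ x ∂φ, x ∈ ({t} : Set ℝ) := by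
    filter_upwards [hzero] with x hx using (sub_eq_zero.1 hx).symm
  rw [← Measure.restrict_eq_self_of_ae_mem hae, Measure.restrict_singleton,
    measure_eq_one_of_compl_eq_zero (s := {t}) hae, one_smul]

theorem integral_dirac_prod {β : Type*} [MeasurableSpace β] {φ : Measure β} [SFinite φ] (x : ℝ)
    (f : ℝ × β → ℝ) : ∫ τ, f τ ∂((Measure.dirac x).prod φ) = ∫ y, f (x, y) ∂φ := by
  rw [Measure.dirac_prod, (measurableEmbedding_prodMk_left x).integral_map]

theorem integral_prod_dirac {α : Type*} [MeasurableSpace α] {φ : Measure α} [SFinite φ] (y : ℝ)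
    (f : α × ℝ → ℝ) : ∫ τ, f τ ∂(φ.prod (Measure.dirac y)) = ∫ x, f (x, y) ∂φ := by
  rw [Measure.prod_dirac, (measurableEmbedding_prod_mk_right y).integral_map]

section Posterior

variable {μ q : ℝ}

theorem posterior_denom_pos (hμ : μ ∈ Ioo (0:ℝ) 1) (hq : q ∈ Icc (0:ℝ) 1) :
    0 < μ * q + (1 - μ) * (1 - q) := by
  obtain ⟨hμ0, hμ1⟩ := hμ
  obtain ⟨hq0, hq1⟩ := hq
  nlinarith [mul_nonneg hμ0.le hq0, mul_nonneg (sub_nonneg.2 hμ1.le) (sub_nonneg.2 hq1),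
    mul_pos hμ0 (sub_pos.2 hμ1)]

theorem monotoneOn_posterior (hμ : μ ∈ Ioo (0:ℝ) 1) : MonotoneOn (posterior μ) (Icc 0 1) := by
  intro a ha b hb hab
  rw [posterior, posterior, div_le_div_iff₀ (posterior_denom_pos hμ ha) (posterior_denom_pos hμ hb)]
  nlinarith [mul_nonneg (mul_nonneg hμ.1.le (sub_nonneg.2 hμ.2.le)) (sub_nonneg.2 hab)]

theorem continuousAt_posterior (hμ : μ ∈ Ioo (0:ℝ) 1) (hq : q ∈ Icc (0:ℝ) 1) :
    ContinuousAt (posterior μ) q :=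
  ((continuous_const.mul continuous_id).continuousAt).div (by fun_prop)
    (posterior_denom_pos hμ hq).ne'

theorem measurable_posterior (μ : ℝ) : Measurable (posterior μ) := by
  unfold posterior
  fun_prop

theorem posterior_pos (hμ : μ ∈ Ioo (0:ℝ) 1) (hq : q ∈ Ioc (0:ℝ) 1) : 0 < posterior μ q :=
  div_pos (mul_pos hμ.1 hq.1) (posterior_denom_pos hμ (Ioc_subset_Icc_self hq))

theorem posterior_lt_one (hμ : μ ∈ Ioo (0:ℝ) 1) (hq : q ∈ Ico (0:ℝ) 1) : posterior μ q < 1 := by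
  rw [posterior, div_lt_one (posterior_denom_pos hμ (Ico_subset_Icc_self hq))]
  nlinarith [hμ.2, hq.2]

end Posterior

namespace SignalStructure

variable {S : Type} [MeasurableSpace S] (𝒮 : SignalStructure S)

theorem measurable_p : Measurable 𝒮.p := by
  unfold p f0 f1
  fun_prop

theorem p_nonneg (s : S) : 0 ≤ 𝒮.p s := by
  unfold p
  positivity

theorem p_le_one (s : S) : 𝒮.p s ≤ 1 :=
  div_le_one_of_le₀ (le_add_of_nonneg_right ENNReal.toReal_nonneg)
    (add_nonneg ENNReal.toReal_nonneg ENNReal.toReal_nonneg)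

instance isFiniteMeasure_ref : IsFiniteMeasure 𝒮.ref := by
  have := 𝒮.prob0
  have := 𝒮.prob1
  constructor
  simp [ref]

theorem F0_ac_ref : 𝒮.F0 ≪ 𝒮.ref :=
  (Measure.AbsolutelyContinuous.rfl.add_right 𝒮.F1).trans
    (Measure.absolutelyContinuous_smul (by simp))

theorem F1_ac_ref : 𝒮.F1 ≪ 𝒮.ref :=
  (Measure.AbsolutelyContinuous.rfl.add_right' 𝒮.F0).trans
    (Measure.absolutelyContinuous_smul (by simp))

theorem ae_p_pos : ∀ᵐ s ∂𝒮.F0, 0 < 𝒮.p s := by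
  have := 𝒮.prob0
  filter_upwards [Measure.rnDeriv_pos 𝒮.F0_ac_ref,
    𝒮.F0_ac_ref.ae_le (Measure.rnDeriv_lt_top 𝒮.F0 𝒮.ref)] with s hpos htop
  have h0 : 0 < (𝒮.f0 s).toReal := ENNReal.toReal_pos hpos.ne' htop.ne
  exact div_pos h0 (add_pos_of_pos_of_nonneg h0 ENNReal.toReal_nonneg)

theorem ae_p_lt_one : ∀ᵐ s ∂𝒮.F1, 𝒮.p s < 1 := by
  have := 𝒮.prob1
  filter_upwards [Measure.rnDeriv_pos 𝒮.F1_ac_ref,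
    𝒮.F1_ac_ref.ae_le (Measure.rnDeriv_lt_top 𝒮.F1 𝒮.ref)] with s hpos htop
  have h1 : 0 < (𝒮.f1 s).toReal := ENNReal.toReal_pos hpos.ne' htop.ne
  exact (div_lt_one (add_pos_of_nonneg_of_pos ENNReal.toReal_nonneg h1)).2
    (lt_add_of_pos_right _ h1)

theorem G0_eq_one_of_one_lt {x : ℝ} (hx : 1 < x) : 𝒮.G0 x = 1 := by
  have := 𝒮.prob0
  simp [G0, fun s => (𝒮.p_le_one s).trans_lt hx]

theorem G0_eq_zero_of_nonpos {x : ℝ} (hx : x ≤ 0) : 𝒮.G0 x = 0 := by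
  have hempty : {s | 𝒮.p s < x} = ∅ :=
    Set.eq_empty_of_forall_notMem fun s hs => (hx.trans (𝒮.p_nonneg s)).not_gt hs
  simp [G0, hempty]

theorem alphaLo_nonneg : 0 ≤ 𝒮.alphaLo :=
  le_csInf ⟨2, by simp [𝒮.G0_eq_one_of_one_lt one_lt_two]⟩ fun _ hy =>
    not_lt.1 fun hneg => (ne_of_gt hy) (𝒮.G0_eq_zero_of_nonpos hneg.le)

theorem ae_alphaLo_le_p : ∀ᵐ s ∂𝒮.F0, 𝒮.alphaLo ≤ 𝒮.p s := by
  have := 𝒮.prob0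
  refine ae_ge_of_forall_lt fun x hx => ?_
  have hbdd : BddBelow {x | 0 < 𝒮.G0 x} :=
    ⟨0, fun _ hy => not_lt.1 fun hneg => (ne_of_gt hy) (𝒮.G0_eq_zero_of_nonpos hneg.le)⟩
  have hG : 𝒮.G0 x = 0 := le_antisymm
    (not_lt.1 (notMem_of_lt_csInf (s := {x | 0 < 𝒮.G0 x}) hx hbdd)) ENNReal.toReal_nonneg
  simp only [G0, ENNReal.toReal_eq_zero_iff, measure_ne_top, or_false] at hG
  simpa [ae_iff] using hG

theorem F0_lt_pos_of_alphaLo_lt {x : ℝ} (hx : 𝒮.alphaLo < x) : 0 < 𝒮.F0 {s | 𝒮.p s < x} := by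
  obtain ⟨y, hy, hyx⟩ :=
    exists_lt_of_csInf_lt ⟨2, by simp [𝒮.G0_eq_one_of_one_lt one_lt_two]⟩ hx
  exact (ENNReal.toReal_pos_iff.1 hy).1.trans_le
    (measure_mono fun s (hs : 𝒮.p s < y) => hs.trans hyx)

theorem alphaLo_lt_one : 𝒮.alphaLo < 1 := by
  have := 𝒮.prob1
  obtain ⟨s, hlo, hs⟩ :=
    (Filter.Eventually.and (𝒮.ac10.ae_le 𝒮.ae_alphaLo_le_p) 𝒮.ae_p_lt_one).exists
  exact hlo.trans_lt hs

theorem alphaHi_le_one : 𝒮.alphaHi ≤ 1 :=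
  csSup_le ⟨0, by simp [𝒮.G0_eq_zero_of_nonpos le_rfl]⟩ fun _ hy =>
    not_lt.1 fun hgt => (ne_of_lt hy) (𝒮.G0_eq_one_of_one_lt hgt)

theorem ae_p_le_alphaHi : ∀ᵐ s ∂𝒮.F0, 𝒮.p s ≤ 𝒮.alphaHi := by
  have := 𝒮.prob0
  refine ae_le_of_forall_gt fun x hx => ?_
  have hbdd : BddAbove {x | 𝒮.G0 x < 1} :=
    ⟨1, fun _ hy => not_lt.1 fun hgt => (ne_of_lt hy) (𝒮.G0_eq_one_of_one_lt hgt)⟩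
  have hG : 𝒮.G0 x = 1 :=
    le_antisymm measureReal_le_one
      (not_lt.1 (notMem_of_csSup_lt (s := {x | 𝒮.G0 x < 1}) hx hbdd))
  have hcompl : 𝒮.F0 {s | 𝒮.p s < x}ᶜ = 0 :=
    (prob_compl_eq_zero_iff (𝒮.measurable_p measurableSet_Iio)).2
      ((ENNReal.toReal_eq_one_iff _).1 hG)
  exact (measure_eq_zero_iff_ae_notMem.1 hcompl).mono fun _ hs => (not_not.1 hs).le

theorem F0_le_pos_of_lt_alphaHi {x : ℝ} (hx : x < 𝒮.alphaHi) : 0 < 𝒮.F0 {s | x ≤ 𝒮.p s} := by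
  have := 𝒮.prob0
  obtain ⟨y, hy, hxy⟩ := exists_lt_of_lt_csSup ⟨0, by simp [𝒮.G0_eq_zero_of_nonpos le_rfl]⟩ hx
  refine pos_iff_ne_zero.2 fun h0 => (ne_of_lt (show 𝒮.G0 y < 1 from hy)) ?_
  have hae : ∀ᵐ s ∂𝒮.F0, 𝒮.p s < y := by
    filter_upwards [measure_eq_zero_iff_ae_notMem.1 h0] with s hs
    exact (not_le.1 hs).trans hxy
  simp [G0, measure_eq_one_of_compl_eq_zero (s := {s | 𝒮.p s < y}) hae]

theorem alphaHi_pos : 0 < 𝒮.alphaHi := by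
  have := 𝒮.prob0
  obtain ⟨s, hs, hhi⟩ := (𝒮.ae_p_pos.and 𝒮.ae_p_le_alphaHi).exists
  exact hs.trans_le hhi

variable {μ : ℝ}

theorem isProbabilityMeasure_Fmix (hμ : μ ∈ Ioo (0:ℝ) 1) : IsProbabilityMeasure (𝒮.Fmix μ) := by
  have := 𝒮.prob0
  have := 𝒮.prob1
  constructor
  simp [Fmix, ← ENNReal.ofReal_add hμ.1.le (sub_nonneg.2 hμ.2.le)]

theorem Fmix_ac_F0 (μ : ℝ) : 𝒮.Fmix μ ≪ 𝒮.F0 :=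
  Measure.AbsolutelyContinuous.add_left (Measure.AbsolutelyContinuous.smul_left .rfl _)
    (Measure.AbsolutelyContinuous.smul_left 𝒮.ac10 _)

theorem Fmix_pos_of_F0_pos (hμ : 0 < μ) {A : Set S} (hA : 0 < 𝒮.F0 A) : 0 < 𝒮.Fmix μ A :=
  (ENNReal.mul_pos (by simpa using hμ) hA.ne').trans_le le_self_add

theorem ae_posterior_alphaLo_le (hμ : μ ∈ Ioo (0:ℝ) 1) :
    ∀ᵐ s ∂𝒮.Fmix μ, posterior μ 𝒮.alphaLo ≤ posterior μ (𝒮.p s) := by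
  filter_upwards [𝒮.Fmix_ac_F0 μ |>.ae_le 𝒮.ae_alphaLo_le_p] with s hs
  exact monotoneOn_posterior hμ ⟨𝒮.alphaLo_nonneg, 𝒮.alphaLo_lt_one.le⟩
    ⟨𝒮.p_nonneg s, 𝒮.p_le_one s⟩ hs

theorem ae_posterior_le_alphaHi (hμ : μ ∈ Ioo (0:ℝ) 1) :
    ∀ᵐ s ∂𝒮.Fmix μ, posterior μ (𝒮.p s) ≤ posterior μ 𝒮.alphaHi := by
  filter_upwards [𝒮.Fmix_ac_F0 μ |>.ae_le 𝒮.ae_p_le_alphaHi] with s hs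
  exact monotoneOn_posterior hμ ⟨𝒮.p_nonneg s, 𝒮.p_le_one s⟩
    ⟨𝒮.alphaHi_pos.le, 𝒮.alphaHi_le_one⟩ hs

theorem Fmix_posterior_lt_pos (hμ : μ ∈ Ioo (0:ℝ) 1) {u : ℝ} (hu : posterior μ 𝒮.alphaLo < u) :
    0 < 𝒮.Fmix μ {s | posterior μ (𝒮.p s) < u} := by
  have hcont := continuousAt_posterior hμ ⟨𝒮.alphaLo_nonneg, 𝒮.alphaLo_lt_one.le⟩
  obtain ⟨x, hxu, hx⟩ := ((hcont.eventually (gt_mem_nhds hu)).filter_mono nhdsWithin_le_nhds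
    |>.and (Ioo_mem_nhdsGT 𝒮.alphaLo_lt_one)).exists
  refine (𝒮.Fmix_pos_of_F0_pos hμ.1 (𝒮.F0_lt_pos_of_alphaLo_lt hx.1)).trans_le
    (measure_mono fun s (hs : 𝒮.p s < x) => ?_)
  exact (monotoneOn_posterior hμ ⟨𝒮.p_nonneg s, 𝒮.p_le_one s⟩
    ⟨(𝒮.p_nonneg s).trans hs.le, hx.2.le⟩ hs.le).trans_lt hxu

theorem Fmix_lt_posterior_pos (hμ : μ ∈ Ioo (0:ℝ) 1) {u : ℝ} (hu : u < posterior μ 𝒮.alphaHi) :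
    0 < 𝒮.Fmix μ {s | u < posterior μ (𝒮.p s)} := by
  have hcont := continuousAt_posterior hμ ⟨𝒮.alphaHi_pos.le, 𝒮.alphaHi_le_one⟩
  obtain ⟨x, hxu, hx⟩ := ((hcont.eventually (lt_mem_nhds hu)).filter_mono nhdsWithin_le_nhds
    |>.and (Ioo_mem_nhdsLT 𝒮.alphaHi_pos)).exists
  refine (𝒮.Fmix_pos_of_F0_pos hμ.1 (𝒮.F0_le_pos_of_lt_alphaHi hx.2)).trans_le
    (measure_mono fun s (hs : x ≤ 𝒮.p s) => ?_)
  exact hxu.trans_le (monotoneOn_posterior hμ ⟨hx.1.le, hx.2.le.trans 𝒮.alphaHi_le_one⟩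
    ⟨𝒮.p_nonneg s, 𝒮.p_le_one s⟩ hs)

end SignalStructure

def CAction.swap : CAction → CAction
  | .buy0 => .buy1
  | .buy1 => .buy0
  | .exit => .exit

theorem CAction.swap_eq_iff {a b : CAction} : a.swap = b ↔ a = b.swap := by
  cases a <;> cases b <;> simp [CAction.swap]

def IsBestAction (q τ0 τ1 : ℝ) (b : CAction) : Prop :=
  ∀ a, cUtil q τ0 τ1 a ≤ cUtil q τ0 τ1 b

/-- The posterior below which buying from firm 1 beats both buying from firm 0 and exiting. -/
def buy1Cutoff (τ0 τ1 : ℝ) : ℝ := min ((1 + τ0 - τ1) / 2) (1 - τ1)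

namespace IsBestAction

variable {q τ0 τ1 : ℝ} {b : CAction}

theorem swap (h : IsBestAction q τ0 τ1 b) : IsBestAction (1 - q) τ1 τ0 b.swap := by
  intro a
  have ha := h a.swap
  cases a <;> cases b <;> simp only [CAction.swap, cUtil] at ha ⊢ <;> linarith

theorem ne_exit (h : IsBestAction q τ0 τ1 b) (hq : τ0 < q) : b ≠ .exit := by
  rintro rfl
  have := h .buy0
  simp only [cUtil] at this
  linarith

theorem ne_buy1 (h : IsBestAction q τ0 τ1 b) (hq : (1 + τ0 - τ1) / 2 < q) : b ≠ .buy1 := by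
  rintro rfl
  have := h .buy0
  simp only [cUtil] at this
  linarith

theorem eq_buy1 (h : IsBestAction q τ0 τ1 b) (hq : q < buy1Cutoff τ0 τ1) : b = .buy1 := by
  obtain ⟨h0, h1⟩ := lt_min_iff.1 hq
  have := h .buy1
  cases b <;> simp only [cUtil] at this <;> first | rfl | linarith

theorem le_buy1Cutoff (h : IsBestAction q τ0 τ1 .buy1) : q ≤ buy1Cutoff τ0 τ1 := by
  have h0 := h .buy0
  have he := h .exit
  simp only [cUtil] at h0 he
  exact le_min (by linarith) (by linarith)

end IsBestAction

section PriceGame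

variable {S : Type} [MeasurableSpace S]

def saleProb (ν : Measure S) (A : CStrategy S) (a : CAction) (τ0 τ1 : ℝ) : ℝ :=
  (ν {s | A τ0 τ1 s = a}).toReal

def saleProbMix (ν : Measure S) (A : CStrategy S) (a : CAction) (φ0 φ1 : Measure ℝ) : ℝ :=
  ∫ τ, saleProb ν A a τ.1 τ.2 ∂(φ0.prod φ1)

def payoff0 (ν : Measure S) (A : CStrategy S) (φ0 φ1 : Measure ℝ) : ℝ :=
  ∫ τ, saleProb ν A .buy0 τ.1 τ.2 * τ.1 ∂(φ0.prod φ1)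

def payoff1 (ν : Measure S) (A : CStrategy S) (φ0 φ1 : Measure ℝ) : ℝ :=
  ∫ τ, saleProb ν A .buy1 τ.1 τ.2 * τ.2 ∂(φ0.prod φ1)

/-- The stage game seen through the consumer's posterior `Q` on state 0 alone, with signals
distributed according to `ν`. -/
structure IsPriceEquilibrium (ν : Measure S) (Q : S → ℝ) (φ0 φ1 : Measure ℝ) (A : CStrategy S) :
    Prop where
  strat0 : IsPriceStrategy φ0
  strat1 : IsPriceStrategy φ1
  bestReply : ∀ τ0 ∈ Icc (0:ℝ) 1, ∀ τ1 ∈ Icc (0:ℝ) 1,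
    ∀ᵐ s ∂ν, IsBestAction (Q s) τ0 τ1 (A τ0 τ1 s)
  opt0 : ∀ ψ, IsPriceStrategy ψ → payoff0 ν A ψ φ1 ≤ payoff0 ν A φ0 φ1
  opt1 : ∀ ψ, IsPriceStrategy ψ → payoff1 ν A φ0 ψ ≤ payoff1 ν A φ0 φ1

theorem SignalStructure.IsSPE.isPriceEquilibrium {𝒮 : SignalStructure S} {μ : ℝ}
    {φ0 φ1 : Measure ℝ} {σ : CStrategy S} (h : 𝒮.IsSPE μ φ0 φ1 σ) :
    IsPriceEquilibrium (𝒮.Fmix μ) (fun s => posterior μ (𝒮.p s)) φ0 φ1 σ :=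
  ⟨h.strat0, h.strat1, h.consumerBR, h.firm0opt, h.firm1opt⟩

theorem IsPriceStrategy.ae_mem_Icc {φ : Measure ℝ} (h : IsPriceStrategy φ) :
    ∀ᵐ x ∂φ, x ∈ Icc (0:ℝ) 1 :=
  have := h.1
  (prob_compl_eq_zero_iff measurableSet_Icc).2 h.2

theorem isPriceStrategy_dirac {x : ℝ} (hx : x ∈ Icc (0:ℝ) 1) : IsPriceStrategy (Measure.dirac x) :=
  ⟨inferInstance, Measure.dirac_apply_of_mem hx⟩

theorem IsPriceStrategy.integrable_id {φ : Measure ℝ} (h : IsPriceStrategy φ) :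
    Integrable (fun x => x) φ :=
  have := h.1
  .of_bound measurable_id.aestronglyMeasurable 1 <| by
    filter_upwards [h.ae_mem_Icc] with x hx
    rw [Real.norm_of_nonneg hx.1]
    exact hx.2

end PriceGame

section Deterrence

variable {S : Type} [MeasurableSpace S] {ν : Measure S} {Q : S → ℝ} {φ0 φ1 : Measure ℝ}
  {A : CStrategy S} {a : CAction} {m τ0 τ1 : ℝ}

theorem saleProb_nonneg : 0 ≤ saleProb ν A a τ0 τ1 := ENNReal.toReal_nonneg

theorem saleProb_le_one [IsProbabilityMeasure ν] : saleProb ν A a τ0 τ1 ≤ 1 := measureReal_le_one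

theorem saleProb_eq_zero_iff [IsFiniteMeasure ν] :
    saleProb ν A a τ0 τ1 = 0 ↔ ν {s | A τ0 τ1 s = a} = 0 := measureReal_eq_zero_iff

theorem integrable_saleProb [IsProbabilityMeasure ν] {α : Type*} [MeasurableSpace α]
    {φ : Measure α} [IsFiniteMeasure φ] {f g : α → ℝ}
    (hm : AEStronglyMeasurable (fun x => saleProb ν A a (f x) (g x)) φ) :
    Integrable (fun x => saleProb ν A a (f x) (g x)) φ :=
  .of_bound hm 1 <| .of_forall fun _ => by
    rw [Real.norm_of_nonneg saleProb_nonneg]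
    exact saleProb_le_one

theorem countable_setOf_measure_eq_ne_zero [SFinite ν] (hQ : Measurable Q) {g : ℝ → ℝ}
    (hg : Function.Injective g) : {x | ν {s | Q s = g x} ≠ 0}.Countable :=
  ((Measure.countable_meas_level_set_pos hQ).preimage hg).mono fun _ hx => pos_iff_ne_zero.2 hx

theorem measurable_toReal_measure_lt [IsFiniteMeasure ν] :
    Measurable fun c => (ν {s | Q s < c}).toReal :=
  Monotone.measurable fun _ _ hcd =>
    ENNReal.toReal_mono (measure_ne_top _ _) (measure_mono fun _ hs => lt_of_lt_of_le hs hcd)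

namespace IsPriceEquilibrium

theorem measure_lt_le_measure_buy1 (h : IsPriceEquilibrium ν Q φ0 φ1 A) (hτ0 : τ0 ∈ Icc (0:ℝ) 1)
    (hτ1 : τ1 ∈ Icc (0:ℝ) 1) {c : ℝ} (hc : c ≤ buy1Cutoff τ0 τ1) :
    ν {s | Q s < c} ≤ ν {s | A τ0 τ1 s = .buy1} :=
  measure_mono_ae <| by
    filter_upwards [h.bestReply τ0 hτ0 τ1 hτ1] with s hs hlt using
      hs.eq_buy1 (lt_of_lt_of_le hlt hc)

theorem saleProb_buy1_eq (h : IsPriceEquilibrium ν Q φ0 φ1 A) (hτ0 : τ0 ∈ Icc (0:ℝ) 1)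
    (hτ1 : τ1 ∈ Icc (0:ℝ) 1) (hatom : ν {s | Q s = buy1Cutoff τ0 τ1} = 0) :
    saleProb ν A .buy1 τ0 τ1 = (ν {s | Q s < buy1Cutoff τ0 τ1}).toReal := by
  refine congrArg ENNReal.toReal
    (le_antisymm (measure_mono_ae ?_) (h.measure_lt_le_measure_buy1 hτ0 hτ1 le_rfl))
  filter_upwards [h.bestReply τ0 hτ0 τ1 hτ1, measure_eq_zero_iff_ae_notMem.1 hatom]
    with s hs hne (hbuy : A τ0 τ1 s = .buy1)
  exact lt_of_le_of_ne (hbuy ▸ hs).le_buy1Cutoff hne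

-- A consumer strategy need not be measurable in the prices. Best replies pin firm 1's sales down
-- to a monotone function of `buy1Cutoff`, except where the cutoff is one of the countably many
-- atoms of `Q`.
theorem aestronglyMeasurable_saleProb_buy1_left [IsProbabilityMeasure ν]
    (h : IsPriceEquilibrium ν Q φ0 φ1 A) (hQ : Measurable Q) (hτ1 : τ1 ∈ Icc (0:ℝ) 1)
    (hatom : τ1 = 0 ∨ ν {s | Q s = 1 - τ1} = 0) :
    AEStronglyMeasurable (fun τ0 => saleProb ν A .buy1 τ0 τ1) φ0 := by
  refine aestronglyMeasurable_of_ae_eq_off_countable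
    (countable_setOf_measure_eq_ne_zero (ν := ν) hQ (g := fun τ0 => (1 + τ0 - τ1) / 2)
      fun x y hxy => by simp only at hxy; linarith)
    ((measurable_toReal_measure_lt (ν := ν) (Q := Q)).comp (f := fun τ0 => buy1Cutoff τ0 τ1)
      (by unfold buy1Cutoff; fun_prop)) ?_
  filter_upwards [h.strat0.ae_mem_Icc] with τ0 hτ0 ha
  refine h.saleProb_buy1_eq hτ0 hτ1 ?_
  have ha : ν {s | Q s = (1 + τ0 - τ1) / 2} = 0 := not_not.1 ha
  rcases hatom with rfl | hb
  · rwa [buy1Cutoff, min_eq_left (by linarith [hτ0.2])]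
  · rcases min_choice ((1 + τ0 - τ1) / 2) (1 - τ1) with he | he <;> rwa [buy1Cutoff, he]

theorem aestronglyMeasurable_saleProb_buy1_right [IsProbabilityMeasure ν]
    (h : IsPriceEquilibrium ν Q φ0 φ1 A) (hQ : Measurable Q) (hτ0 : τ0 ∈ Icc (0:ℝ) 1) :
    AEStronglyMeasurable (fun τ1 => saleProb ν A .buy1 τ0 τ1) φ1 := by
  refine aestronglyMeasurable_of_ae_eq_off_countable
    ((countable_setOf_measure_eq_ne_zero (ν := ν) hQ (g := fun τ1 => (1 + τ0 - τ1) / 2)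
      fun x y hxy => by simp only at hxy; linarith).union
    (countable_setOf_measure_eq_ne_zero (ν := ν) hQ
      (sub_right_injective : Function.Injective fun x : ℝ => 1 - x)))
    ((measurable_toReal_measure_lt (ν := ν) (Q := Q)).comp (f := fun τ1 => buy1Cutoff τ0 τ1)
      (by unfold buy1Cutoff; fun_prop)) ?_
  filter_upwards [h.strat1.ae_mem_Icc] with τ1 hτ1 hB
  refine h.saleProb_buy1_eq hτ0 hτ1 ?_
  simp only [Set.mem_union, Set.mem_ofPred_eq, not_or, not_not] at hB
  rcases min_choice ((1 + τ0 - τ1) / 2) (1 - τ1) with he | he <;> rw [buy1Cutoff, he]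
  exacts [hB.1, hB.2]

theorem payoff1_eq_zero [IsProbabilityMeasure ν] (h : IsPriceEquilibrium ν Q φ0 φ1 A)
    (hQ : Measurable Q) (H1 : saleProbMix ν A .buy1 φ0 φ1 = 0) : payoff1 ν A φ0 φ1 = 0 := by
  have := h.strat0.1
  have := h.strat1.1
  -- The Bochner integral of a non-measurable function is `0`, so `H1` only bites once firm 1's
  -- sale probability is known to be a.e.-measurable; this follows from that of its payoff.
  by_cases hint : Integrable (fun τ : ℝ × ℝ => saleProb ν A .buy1 τ.1 τ.2 * τ.2) (φ0.prod φ1)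
  swap
  · exact integral_undef hint
  have hmeas := aestronglyMeasurable_of_mul_snd hint.1
    (h.aestronglyMeasurable_saleProb_buy1_left hQ ⟨le_rfl, zero_le_one⟩ (.inl rfl))
  have hzero := (integral_eq_zero_iff_of_nonneg (fun _ => saleProb_nonneg)
    (integrable_saleProb hmeas)).1 H1
  refine integral_eq_zero_of_ae ?_
  filter_upwards [hzero] with τ hτ
  simp only [Pi.zero_apply] at hτ ⊢
  rw [hτ, zero_mul]

theorem measureReal_Ioi_mul_le_integral_saleProb_buy1 [IsFiniteMeasure ν]
    (h : IsPriceEquilibrium ν Q φ0 φ1 A)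
    (hτ1 : τ1 ∈ Icc (0:ℝ) 1) (hint : Integrable (fun τ0 => saleProb ν A .buy1 τ0 τ1 * τ1) φ0)
    (p : ℝ) : φ0.real (Ioi p) * ((ν {s | Q s < buy1Cutoff p τ1}).toReal * τ1) ≤
      ∫ τ0, saleProb ν A .buy1 τ0 τ1 * τ1 ∂φ0 := by
  have hc : 0 ≤ (ν {s | Q s < buy1Cutoff p τ1}).toReal * τ1 :=
    mul_nonneg ENNReal.toReal_nonneg hτ1.1
  rw [← smul_eq_mul, ← integral_indicator_const _ measurableSet_Ioi]
  refine integral_mono_of_nonneg (.of_forall fun _ => Set.indicator_nonneg (fun _ _ => hc) _)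
    hint ?_
  filter_upwards [h.strat0.ae_mem_Icc] with τ0 hτ0
  by_cases hgt : τ0 ∈ Ioi p
  · rw [Set.indicator_of_mem hgt]
    refine mul_le_mul_of_nonneg_right (ENNReal.toReal_mono (measure_ne_top _ _)
      (h.measure_lt_le_measure_buy1 hτ0 hτ1 (min_le_min ?_ le_rfl))) hτ1.1
    linarith [show p < τ0 from hgt]
  · rw [Set.indicator_of_notMem hgt]
    exact mul_nonneg saleProb_nonneg hτ1.1

theorem measure_Ioi_price0_eq_zero [IsProbabilityMeasure ν] (h : IsPriceEquilibrium ν Q φ0 φ1 A)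
    (hQ : Measurable Q) (hm : m < 1) (hQpos : ∀ u, m < u → 0 < ν {s | Q s < u})
    (H1 : saleProbMix ν A .buy1 φ0 φ1 = 0) {δ : ℝ} (hδ : 0 < δ) :
    φ0 (Ioi (2 * m - 1 + δ)) = 0 := by
  have := h.strat0.1
  by_contra hne
  -- Firm 1 deviates to a small price `τ1` at which `1 - τ1` is not an atom of `Q`, so that its
  -- sales are a.e.-measurable in `τ0`.
  obtain ⟨τ1, hatom, hτ1, hτ1lt⟩ :=
    ((countable_setOf_measure_eq_ne_zero (ν := ν) hQ
      (sub_right_injective : Function.Injective fun x : ℝ => 1 - x)).dense_compl ℝ).exists_between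
      (lt_min hδ (lt_min (sub_pos.2 hm) one_pos))
  obtain ⟨hτ1δ, hτ1m, hτ1one⟩ : τ1 < δ ∧ τ1 < 1 - m ∧ τ1 < 1 := by simpa using hτ1lt
  have hτ1I : τ1 ∈ Icc (0:ℝ) 1 := ⟨hτ1.le, hτ1one.le⟩
  have hint : Integrable (fun τ0 => saleProb ν A .buy1 τ0 τ1 * τ1) φ0 :=
    (integrable_saleProb (h.aestronglyMeasurable_saleProb_buy1_left hQ hτ1I
      (.inr (not_not.1 hatom)))).mul_const τ1
  have hdev : ∫ τ0, saleProb ν A .buy1 τ0 τ1 * τ1 ∂φ0 ≤ 0 := by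
    have := h.opt1 _ (isPriceStrategy_dirac hτ1I)
    rwa [h.payoff1_eq_zero hQ H1, payoff1, integral_prod_dirac] at this
  have hw : 0 < (ν {s | Q s < buy1Cutoff (2 * m - 1 + δ) τ1}).toReal :=
    ENNReal.toReal_pos (hQpos _ (lt_min (by linarith) (by linarith))).ne' (measure_ne_top _ _)
  have hpos : 0 < φ0.real (Ioi (2 * m - 1 + δ)) *
      ((ν {s | Q s < buy1Cutoff (2 * m - 1 + δ) τ1}).toReal * τ1) :=
    mul_pos (ENNReal.toReal_pos hne (measure_ne_top _ _)) (mul_pos hw hτ1)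
  linarith [h.measureReal_Ioi_mul_le_integral_saleProb_buy1 hτ1I hint (2 * m - 1 + δ)]

theorem ae_price0_le [IsProbabilityMeasure ν] (h : IsPriceEquilibrium ν Q φ0 φ1 A)
    (hQ : Measurable Q) (hm : m < 1) (hQpos : ∀ u, m < u → 0 < ν {s | Q s < u})
    (H1 : saleProbMix ν A .buy1 φ0 φ1 = 0) : ∀ᵐ τ0 ∂φ0, τ0 ≤ 2 * m - 1 :=
  ae_le_of_forall_gt fun x hx => by
    have hnull := h.measure_Ioi_price0_eq_zero hQ hm hQpos H1 (sub_pos.2 hx)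
    rw [add_sub_cancel] at hnull
    exact (measure_eq_zero_iff_ae_notMem.1 hnull).mono fun _ hτ0 => not_lt.1 hτ0

theorem measure_buy1_eq_zero (h : IsPriceEquilibrium ν Q φ0 φ1 A) (hQm : ∀ᵐ s ∂ν, m ≤ Q s)
    (hτ0 : τ0 ∈ Icc (0:ℝ) 1) (hτ1 : τ1 ∈ Icc (0:ℝ) 1) (hlt : (1 + τ0 - τ1) / 2 < m) :
    ν {s | A τ0 τ1 s = .buy1} = 0 :=
  measure_eq_zero_iff_ae_notMem.2 <| by
    filter_upwards [h.bestReply τ0 hτ0 τ1 hτ1, hQm] with s hs hms using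
      hs.ne_buy1 (hlt.trans_le hms)

theorem saleProb_buy0_eq_one [IsProbabilityMeasure ν] (h : IsPriceEquilibrium ν Q φ0 φ1 A)
    (hQm : ∀ᵐ s ∂ν, m ≤ Q s) (hτ0 : τ0 ∈ Icc (0:ℝ) 1) (hτ1 : τ1 ∈ Icc (0:ℝ) 1) (hlt : τ0 < m)
    (hbuy1 : ν {s | A τ0 τ1 s = .buy1} = 0) : saleProb ν A .buy0 τ0 τ1 = 1 := by
  rw [saleProb, measure_eq_one_of_compl_eq_zero, ENNReal.toReal_one]
  refine measure_eq_zero_iff_ae_notMem.2 ?_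
  filter_upwards [h.bestReply τ0 hτ0 τ1 hτ1, hQm, measure_eq_zero_iff_ae_notMem.1 hbuy1]
    with s hs hms hne
  simp only [Set.mem_compl_iff, Set.mem_ofPred_eq, not_not]
  cases hA : A τ0 τ1 s
  · rfl
  · exact absurd hA hne
  · exact absurd hA (hs.ne_exit (hlt.trans_le hms))

theorem payoff0_nonneg (h : IsPriceEquilibrium ν Q φ0 φ1 A) : 0 ≤ payoff0 ν A φ0 φ1 := by
  have := h.strat1.1
  refine integral_nonneg_of_ae ?_
  filter_upwards [Measure.quasiMeasurePreserving_fst.ae h.strat0.ae_mem_Icc] with τ hτ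
  exact mul_nonneg saleProb_nonneg hτ.1

theorem payoff0_le_integral [IsProbabilityMeasure ν] (h : IsPriceEquilibrium ν Q φ0 φ1 A) :
    payoff0 ν A φ0 φ1 ≤ ∫ x, x ∂φ0 := by
  have := h.strat0.1
  have := h.strat1.1
  have hτ : ∀ᵐ τ ∂(φ0.prod φ1), τ.1 ∈ Icc (0:ℝ) 1 :=
    Measure.quasiMeasurePreserving_fst.ae h.strat0.ae_mem_Icc
  calc payoff0 ν A φ0 φ1 ≤ ∫ τ, τ.1 ∂(φ0.prod φ1) := by
        refine integral_mono_of_nonneg ?_ (h.strat0.integrable_id.comp_fst φ1) ?_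
        · filter_upwards [hτ] with τ hτ using mul_nonneg saleProb_nonneg hτ.1
        · filter_upwards [hτ] with τ hτ using mul_le_of_le_one_left hτ.1 saleProb_le_one
    _ = ∫ x, x ∂φ0 := by rw [integral_fun_fst (fun x : ℝ => x)]; simp

theorem le_payoff0 [IsProbabilityMeasure ν] (h : IsPriceEquilibrium ν Q φ0 φ1 A)
    (hm : m < 1) (hQm : ∀ᵐ s ∂ν, m ≤ Q s) : 2 * m - 1 ≤ payoff0 ν A φ0 φ1 := by
  have := h.strat1.1
  refine le_of_forall_lt_imp_le_of_dense fun t ht => ?_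
  rcases lt_or_ge t 0 with hneg | hnonneg
  · exact hneg.le.trans h.payoff0_nonneg
  have htI : t ∈ Icc (0:ℝ) 1 := ⟨hnonneg, by linarith⟩
  calc t = payoff0 ν A (Measure.dirac t) φ1 := by
        rw [payoff0, integral_dirac_prod, integral_congr_ae (g := fun _ => t), integral_const]
        · simp
        filter_upwards [h.strat1.ae_mem_Icc] with τ1 hτ1
        rw [h.saleProb_buy0_eq_one hQm htI hτ1 (by linarith)
          (h.measure_buy1_eq_zero hQm htI hτ1 (by linarith [hτ1.1])), one_mul]
    _ ≤ payoff0 ν A φ0 φ1 := h.opt0 _ (isPriceStrategy_dirac htI)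

theorem limitPricing [IsProbabilityMeasure ν] (h : IsPriceEquilibrium ν Q φ0 φ1 A)
    (hQ : Measurable Q) (hm : m < 1) (hQm : ∀ᵐ s ∂ν, m ≤ Q s)
    (hQpos : ∀ u, m < u → 0 < ν {s | Q s < u}) (H1 : saleProbMix ν A .buy1 φ0 φ1 = 0) :
    φ0 {2 * m - 1} = 1 ∧ saleProbMix ν A .buy0 φ0 φ1 = 1 ∧ payoff0 ν A φ0 φ1 = 2 * m - 1 := by
  have := h.strat0.1
  have := h.strat1.1
  have hge := h.le_payoff0 hm hQm
  have hdirac : φ0 = Measure.dirac (2 * m - 1) :=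
    eq_dirac_of_ae_le_of_le_integral h.strat0.integrable_id (h.ae_price0_le hQ hm hQpos H1)
      (hge.trans h.payoff0_le_integral)
  have htI : 2 * m - 1 ∈ Icc (0:ℝ) 1 := by
    simpa [hdirac, measurableSet_Icc] using h.strat0.ae_mem_Icc
  refine ⟨by rw [hdirac]; exact Measure.dirac_apply_of_mem rfl, ?_, ?_⟩
  · rw [saleProbMix, hdirac, integral_dirac_prod] at H1 ⊢
    have hzero := (integral_eq_zero_iff_of_nonneg (fun _ => saleProb_nonneg)
      (integrable_saleProb (h.aestronglyMeasurable_saleProb_buy1_right hQ htI))).1 H1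
    rw [integral_congr_ae (g := fun _ => (1:ℝ)), integral_const]
    · simp
    filter_upwards [hzero, h.strat1.ae_mem_Icc] with τ1 hτ1 hI
    exact h.saleProb_buy0_eq_one hQm htI hI (by linarith) (saleProb_eq_zero_iff.1 hτ1)
  · refine le_antisymm (h.payoff0_le_integral.trans_eq ?_) hge
    rw [hdirac, integral_dirac]

end IsPriceEquilibrium

end Deterrence

section Swap

variable {S : Type} [MeasurableSpace S] {ν : Measure S} {φ0 φ1 : Measure ℝ} {A : CStrategy S}

def swapStrategy (A : CStrategy S) : CStrategy S := fun τ0 τ1 s => (A τ1 τ0 s).swap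

theorem saleProb_swapStrategy (a : CAction) (τ0 τ1 : ℝ) :
    saleProb ν (swapStrategy A) a τ0 τ1 = saleProb ν A a.swap τ1 τ0 := by
  simp only [saleProb, swapStrategy, CAction.swap_eq_iff]

variable [SFinite φ0] [SFinite φ1]

theorem saleProbMix_swapStrategy (a : CAction) :
    saleProbMix ν (swapStrategy A) a φ1 φ0 = saleProbMix ν A a.swap φ0 φ1 := by
  simp only [saleProbMix, saleProb_swapStrategy]
  exact integral_prod_swap (fun τ : ℝ × ℝ => saleProb ν A a.swap τ.1 τ.2)

theorem payoff0_swapStrategy : payoff0 ν (swapStrategy A) φ1 φ0 = payoff1 ν A φ0 φ1 := by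
  simp only [payoff0, payoff1, saleProb_swapStrategy]
  exact integral_prod_swap (fun τ : ℝ × ℝ => saleProb ν A .buy1 τ.1 τ.2 * τ.2)

theorem payoff1_swapStrategy : payoff1 ν (swapStrategy A) φ1 φ0 = payoff0 ν A φ0 φ1 := by
  simp only [payoff0, payoff1, saleProb_swapStrategy]
  exact integral_prod_swap (fun τ : ℝ × ℝ => saleProb ν A .buy0 τ.1 τ.2 * τ.1)

end Swap

theorem IsPriceEquilibrium.swap {S : Type} [MeasurableSpace S] {ν : Measure S} {Q : S → ℝ}
    {φ0 φ1 : Measure ℝ} {A : CStrategy S} (h : IsPriceEquilibrium ν Q φ0 φ1 A) :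
    IsPriceEquilibrium ν (fun s => 1 - Q s) φ1 φ0 (swapStrategy A) := by
  have := h.strat0.1
  have := h.strat1.1
  refine ⟨h.strat1, h.strat0, fun τ0 hτ0 τ1 hτ1 =>
    (h.bestReply τ1 hτ1 τ0 hτ0).mono fun s hs => hs.swap, fun ψ hψ => ?_, fun ψ hψ => ?_⟩
  all_goals
    have := hψ.1
    simp only [payoff0_swapStrategy, payoff1_swapStrategy]
  exacts [h.opt1 ψ hψ, h.opt0 ψ hψ]

theorem stmt6_general {S : Type} [MeasurableSpace S] (𝒮 : SignalStructure S)
    (μ : ℝ) (hμ : μ ∈ Ioo (0:ℝ) 1)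
    (φ0 φ1 : Measure ℝ) (σ : CStrategy S)
    (hD : 𝒮.IsDeterrence μ φ0 φ1 σ) :
    (𝒮.actProbMix μ φ0 φ1 σ CAction.buy1 = 0 →
      φ0 {2 * posterior μ 𝒮.alphaLo - 1} = 1 ∧
        𝒮.actProbMix μ φ0 φ1 σ CAction.buy0 = 1 ∧
        𝒮.Pi0 μ φ0 φ1 σ = 2 * posterior μ 𝒮.alphaLo - 1) ∧
      (𝒮.actProbMix μ φ0 φ1 σ CAction.buy0 = 0 →
        φ1 {1 - 2 * posterior μ 𝒮.alphaHi} = 1 ∧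
          𝒮.actProbMix μ φ0 φ1 σ CAction.buy1 = 1 ∧
          𝒮.Pi1 μ φ0 φ1 σ = 1 - 2 * posterior μ 𝒮.alphaHi) := by
  have := 𝒮.isProbabilityMeasure_Fmix hμ
  have h := hD.1.isPriceEquilibrium
  have := h.strat0.1
  have := h.strat1.1
  have hQ : Measurable fun s => posterior μ (𝒮.p s) := (measurable_posterior μ).comp 𝒮.measurable_p
  refine ⟨fun H1 => h.limitPricing hQ
    (posterior_lt_one hμ ⟨𝒮.alphaLo_nonneg, 𝒮.alphaLo_lt_one⟩) (𝒮.ae_posterior_alphaLo_le hμ)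
    (fun u hu => 𝒮.Fmix_posterior_lt_pos hμ hu) H1, fun H0 => ?_⟩
  -- Firm 1 is firm 0 of the game with the roles of the firms, and of the states, swapped.
  obtain ⟨hdirac, hsale, hpay⟩ := h.swap.limitPricing (m := 1 - posterior μ 𝒮.alphaHi)
    (measurable_const.sub hQ) (by linarith [posterior_pos hμ ⟨𝒮.alphaHi_pos, 𝒮.alphaHi_le_one⟩])
    (by filter_upwards [𝒮.ae_posterior_le_alphaHi hμ] with s hs using sub_le_sub_left hs 1)
    (fun u hu => by simpa [sub_lt_comm] using 𝒮.Fmix_lt_posterior_pos hμ (sub_lt_comm.1 hu))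
    (by rw [saleProbMix_swapStrategy]; exact H0)
  rw [saleProbMix_swapStrategy] at hsale
  rw [payoff0_swapStrategy] at hpay
  refine ⟨?_, hsale, hpay.trans (by ring)⟩
  rwa [show 1 - 2 * posterior μ 𝒮.alphaHi = 2 * (1 - posterior μ 𝒮.alphaHi) - 1 by ring]

/-- In a deterrence equilibrium in which Firm 1 is deterred, Firm 0 plays
the pure price 2α⁻_μ − 1 with probability one, the consumer buys from Firm 0 with
probability one, and Firm 0's payoff is 2α⁻_μ − 1.  Symmetrically, if Firm 0 is
deterred, Firm 1 plays the pure price 1 − 2α⁺_μ with probability one and earns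
1 − 2α⁺_μ. -/
theorem stmt6 {S : Type} [MeasurableSpace S] (𝒮 : SignalStructure S)
    (g0 g1 : ℝ → ℝ) (hA : 𝒮.Assumption1 g0 g1)
    (μ : ℝ) (hμ : μ ∈ Ioo (0:ℝ) 1)
    (φ0 φ1 : Measure ℝ) (σ : CStrategy S)
    (hD : 𝒮.IsDeterrence μ φ0 φ1 σ) :
    (𝒮.actProbMix μ φ0 φ1 σ CAction.buy1 = 0 →
      φ0 {2 * posterior μ 𝒮.alphaLo - 1} = 1 ∧
        𝒮.actProbMix μ φ0 φ1 σ CAction.buy0 = 1 ∧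
        𝒮.Pi0 μ φ0 φ1 σ = 2 * posterior μ 𝒮.alphaLo - 1) ∧
      (𝒮.actProbMix μ φ0 φ1 σ CAction.buy0 = 0 →
        φ1 {1 - 2 * posterior μ 𝒮.alphaHi} = 1 ∧
          𝒮.actProbMix μ φ0 φ1 σ CAction.buy1 = 1 ∧
          𝒮.Pi1 μ φ0 φ1 σ = 1 - 2 * posterior μ 𝒮.alphaHi) :=
  stmt6_general 𝒮 μ hμ φ0 φ1 σ hD
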